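/- arXiv:1708.02281 — 2 statements merged into one kernel-verified Lean document; each statement's English description precedes it below -/
import Mathlib

section
/- For every r ≥ 0 and every unit vector u = (u₁,u₂) ∈ ℝ², one has ∫_{-π}^{π} cos t · sin t · exp(i r (u₁ cos t + u₂ sin t)) dt = −2π u₁ u₂ J₂(r). -/
open Real MeasureTheory

/-- Bessel function of the first kind of order `n`, defined by its power series. -/
noncomputable def besselJ (n : ℕ) (t : ℝ) : ℝ :=
  ∑' m : ℕ, ((-1 : ℝ) ^ m / (Nat.factorial m * Nat.factorial (m + n))) * (t / 2) ^ (2 * m + n)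

/-!
Write `(u₁, u₂) = (cos θ, sin θ)`. Shifting the variable by `θ` over a full period turns the phase
into `r cos t` and `cos t sin t` into `(cos 2θ sin 2t + sin 2θ cos 2t) / 2`. The `sin 2t` part
integrates to zero by oddness. For the `cos 2t` part, expand `exp (i r cos t)` and integrate
termwise: the Wallis recursion gives `∫ cos 2t cos^k t = k / (k + 2) ∫ cos^k t`, which vanishes
unless `k = 2m + 2`, and these terms reassemble `-2π J₂(r)`. Finally `sin 2θ / 2 = u₁ u₂`.
-/

open scoped Nat Complex

lemma exists_cos_sin_eq_of_sq_add_sq_eq_one {x y : ℝ} (h : x ^ 2 + y ^ 2 = 1) :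
    ∃ θ : ℝ, cos θ = x ∧ sin θ = y := by
  have hz : ‖(⟨x, y⟩ : ℂ)‖ = 1 := by
    rw [Complex.norm_def, Real.sqrt_eq_one, Complex.normSq_mk, ← h]
    ring
  refine ⟨Complex.arg ⟨x, y⟩, ?_, ?_⟩
  · simpa [hz] using Complex.norm_mul_cos_arg (⟨x, y⟩ : ℂ)
  · simpa [hz] using Complex.norm_mul_sin_arg (⟨x, y⟩ : ℂ)

lemma Function.Periodic.intervalIntegral_comp_add_right {E : Type*} [NormedAddCommGroup E]
    [NormedSpace ℝ E] {f : ℝ → E} {T : ℝ} (hf : Function.Periodic f T) (t s : ℝ) :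
    ∫ x in t..t + T, f (x + s) = ∫ x in t..t + T, f x := by
  rw [intervalIntegral.integral_comp_add_right, add_right_comm]
  exact hf.intervalIntegral_add_eq _ _

lemma intervalIntegral.integral_neg_self_eq_zero_of_odd {E : Type*} [NormedAddCommGroup E]
    [NormedSpace ℝ E] {f : ℝ → E} (hf : ∀ x, f (-x) = -f x) (a : ℝ) :
    ∫ x in -a..a, f x = 0 := by
  have h := intervalIntegral.integral_comp_neg (a := -a) (b := a) f
  simp only [hf, intervalIntegral.integral_neg, neg_neg] at h
  have h2 : (2 : ℝ) • ∫ x in -a..a, f x = 0 := by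
    rw [two_smul]
    nth_rw 1 [← h]
    exact neg_add_cancel _
  exact (smul_eq_zero.mp h2).resolve_left two_ne_zero

theorem intervalIntegral.hasSum_integral_mul_cexp {f g : ℝ → ℂ} (hf : Continuous f)
    (hg : Continuous g) (a b : ℝ) :
    HasSum (fun k : ℕ => (∫ t in a..b, f t * g t ^ k) / k !) (∫ t in a..b, f t * cexp (g t)) := by
  obtain ⟨M, hM⟩ := (isCompact_uIcc (a := a) (b := b)).exists_bound_of_continuousOn hf.continuousOn
  obtain ⟨N, hN⟩ := (isCompact_uIcc (a := a) (b := b)).exists_bound_of_continuousOn hg.continuousOn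
  simp_rw [← intervalIntegral.integral_div, mul_div_assoc]
  refine intervalIntegral.hasSum_integral_of_dominated_convergence (fun k _ => M * (N ^ k / k !))
    (fun k => by fun_prop) (fun k => .of_forall fun t ht => ?_)
    (.of_forall fun t _ => (Real.summable_pow_div_factorial N).mul_left M)
    intervalIntegrable_const (.of_forall fun t _ => ?_)
  · have ht' := Set.uIoc_subset_uIcc ht
    rw [norm_mul, norm_div, norm_pow, Complex.norm_natCast]
    gcongr
    · exact (norm_nonneg _).trans (hM t ht')
    · exact hM t ht'
    · exact hN t ht'
  · simpa [Complex.exp_eq_exp_ℂ] using (NormedSpace.expSeries_div_hasSum_exp (g t)).mul_left (f t)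

lemma integral_cos_pow_add_two_neg_pi_pi (n : ℕ) :
    ∫ t in (-π)..π, cos t ^ (n + 2) = (n + 1) / (n + 2) * ∫ t in (-π)..π, cos t ^ n := by
  simp [integral_cos_pow]

lemma integral_cos_pow_odd_neg_pi_pi (m : ℕ) : ∫ t in (-π)..π, cos t ^ (2 * m + 1) = 0 := by
  induction m with
  | zero => simp
  | succ m ih => rw [show 2 * (m + 1) + 1 = 2 * m + 1 + 2 by ring,
      integral_cos_pow_add_two_neg_pi_pi, ih, mul_zero]

lemma integral_cos_pow_even_neg_pi_pi (m : ℕ) :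
    ∫ t in (-π)..π, cos t ^ (2 * m) = 2 * π * (2 * m)! / (4 ^ m * (m ! : ℝ) ^ 2) := by
  induction m with
  | zero => simp [two_mul]
  | succ m ih =>
    rw [show 2 * (m + 1) = 2 * m + 2 by ring, integral_cos_pow_add_two_neg_pi_pi, ih,
      Nat.factorial_succ (2 * m + 1), Nat.factorial_succ (2 * m), Nat.factorial_succ m]
    push_cast
    field_simp
    ring

lemma integral_cos_two_mul_mul_cos_pow (k : ℕ) :
    ∫ t in (-π)..π, cos (2 * t) * cos t ^ k = k / (k + 2) * ∫ t in (-π)..π, cos t ^ k := by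
  have h : ∀ t, cos (2 * t) * cos t ^ k = 2 * cos t ^ (k + 2) - cos t ^ k := fun t => by
    rw [cos_two_mul]; ring
  simp_rw [h]
  rw [intervalIntegral.integral_sub ((by fun_prop : Continuous _).intervalIntegrable _ _)
    ((by fun_prop : Continuous _).intervalIntegrable _ _), intervalIntegral.integral_const_mul,
    integral_cos_pow_add_two_neg_pi_pi]
  field_simp
  ring

lemma integral_cos_two_mul_mul_cos_pow_eq_zero {k : ℕ} (hk : ∀ m, k ≠ 2 * m + 2) :
    ∫ t in (-π)..π, cos (2 * t) * cos t ^ k = 0 := by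
  rw [integral_cos_two_mul_mul_cos_pow]
  rcases Nat.even_or_odd' k with ⟨j, rfl | rfl⟩
  · obtain rfl : j = 0 := by
      by_contra hj
      exact hk (j - 1) (by omega)
    simp
  · rw [integral_cos_pow_odd_neg_pi_pi, mul_zero]

lemma integral_cos_two_mul_mul_cos_pow_even (m : ℕ) :
    ∫ t in (-π)..π, cos (2 * t) * cos t ^ (2 * m + 2) =
      2 * π * (2 * m + 2)! / (4 ^ (m + 1) * m ! * (m + 2)!) := by
  rw [integral_cos_two_mul_mul_cos_pow, show 2 * m + 2 = 2 * (m + 1) by ring,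
    integral_cos_pow_even_neg_pi_pi, Nat.factorial_succ (m + 1), Nat.factorial_succ m]
  push_cast
  field_simp

lemma I_mul_pow_div_factorial_mul_integral_cos_two_mul_mul_cos_pow_even (r : ℝ) (m : ℕ) :
    (Complex.I * r) ^ (2 * m + 2) / (2 * m + 2)! *
      ((∫ t in (-π)..π, cos (2 * t) * cos t ^ (2 * m + 2) : ℝ) : ℂ) =
        ((-(2 * π) * ((-1) ^ m / (m ! * (m + 2)!) * (r / 2) ^ (2 * m + 2)) : ℝ) : ℂ) := by
  have hI : (Complex.I * r) ^ (2 * m + 2) = -(-1) ^ m * (r : ℂ) ^ (2 * m + 2) := by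
    rw [mul_pow, show 2 * m + 2 = 2 * (m + 1) by ring, pow_mul, Complex.I_sq, pow_succ]
    ring
  have h4 : (2 : ℂ) ^ (2 * m + 2) = 4 ^ (m + 1) := by
    rw [show 2 * m + 2 = 2 * (m + 1) by ring, pow_mul]
    norm_num
  have hfac : ((2 * m + 2)! : ℂ) ≠ 0 := Nat.cast_ne_zero.mpr (Nat.factorial_ne_zero _)
  rw [integral_cos_two_mul_mul_cos_pow_even, hI]
  push_cast
  rw [div_pow, h4]
  field_simp

theorem integral_cos_two_mul_mul_cexp_cos (r : ℝ) :
    ∫ t in (-π)..π, ((cos (2 * t) : ℝ) : ℂ) * cexp (Complex.I * r * ((cos t : ℝ) : ℂ)) =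
      ((-(2 * π) * besselJ 2 r : ℝ) : ℂ) := by
  have hsum := intervalIntegral.hasSum_integral_mul_cexp (a := -π) (b := π)
    (f := fun t => ((cos (2 * t) : ℝ) : ℂ)) (g := fun t => Complex.I * r * ((cos t : ℝ) : ℂ))
    (by fun_prop) (by fun_prop)
  have hterm (k : ℕ) :
      (∫ t in (-π)..π, ((cos (2 * t) : ℝ) : ℂ) * (Complex.I * r * ((cos t : ℝ) : ℂ)) ^ k) / k ! =
        (Complex.I * r) ^ k / k ! * ((∫ t in (-π)..π, cos (2 * t) * cos t ^ k : ℝ) : ℂ) := by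
    have h (t : ℝ) : ((cos (2 * t) : ℝ) : ℂ) * (Complex.I * r * ((cos t : ℝ) : ℂ)) ^ k =
        (Complex.I * r) ^ k * ((cos (2 * t) * cos t ^ k : ℝ) : ℂ) := by
      push_cast
      ring
    simp_rw [h, intervalIntegral.integral_const_mul, intervalIntegral.integral_ofReal]
    ring
  simp_rw [hterm] at hsum
  have hinj : Function.Injective fun m : ℕ => 2 * m + 2 := fun a b h => by simp at h; omega
  rw [← hinj.hasSum_iff fun k hk => by
    rw [integral_cos_two_mul_mul_cos_pow_eq_zero fun m hm => hk ⟨m, hm.symm⟩]; simp] at hsum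
  simp_rw [Function.comp_def,
    I_mul_pow_div_factorial_mul_integral_cos_two_mul_mul_cos_pow_even] at hsum
  rw [← hsum.tsum_eq, ← Complex.ofReal_tsum, tsum_mul_left, besselJ]

theorem integral_sin_two_mul_mul_cexp_cos (r : ℝ) :
    ∫ t in (-π)..π, ((sin (2 * t) : ℝ) : ℂ) * cexp (Complex.I * r * ((cos t : ℝ) : ℂ)) = 0 :=
  intervalIntegral.integral_neg_self_eq_zero_of_odd (fun t => by simp [mul_neg]) π

lemma integral_cos_mul_sin_mul_cexp_rotate (r θ : ℝ) :
    ∫ t in (-π)..π, ((cos t * sin t : ℝ) : ℂ) *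
        cexp (Complex.I * r * ((cos θ * cos t + sin θ * sin t : ℝ) : ℂ)) =
      ∫ t in (-π)..π, ((cos (t + θ) * sin (t + θ) : ℝ) : ℂ) *
        cexp (Complex.I * r * ((cos t : ℝ) : ℂ)) := by
  have hper : Function.Periodic (fun t => ((cos t * sin t : ℝ) : ℂ) *
      cexp (Complex.I * r * ((cos θ * cos t + sin θ * sin t : ℝ) : ℂ))) (2 * π) :=
    fun t => by simp only [cos_add_two_pi, sin_add_two_pi]
  have hshift := hper.intervalIntegral_comp_add_right (-π) θ
  rw [show -π + 2 * π = π by ring] at hshift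
  rw [← hshift]
  congr! 5 with t
  rw [← cos_sub, sub_add_cancel_right, cos_neg]

lemma integral_cos_add_mul_sin_add_mul_cexp_cos (r θ : ℝ) :
    ∫ t in (-π)..π, ((cos (t + θ) * sin (t + θ) : ℝ) : ℂ) *
        cexp (Complex.I * r * ((cos t : ℝ) : ℂ)) =
      ((sin (2 * θ) / 2 * (-(2 * π) * besselJ 2 r) : ℝ) : ℂ) := by
  have hsplit (t : ℝ) : ((cos (t + θ) * sin (t + θ) : ℝ) : ℂ) *
      cexp (Complex.I * r * ((cos t : ℝ) : ℂ)) =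
        ((cos (2 * θ) / 2 : ℝ) : ℂ) * (((sin (2 * t) : ℝ) : ℂ) *
          cexp (Complex.I * r * ((cos t : ℝ) : ℂ))) + ((sin (2 * θ) / 2 : ℝ) : ℂ) *
          (((cos (2 * t) : ℝ) : ℂ) * cexp (Complex.I * r * ((cos t : ℝ) : ℂ))) := by
    have h := sin_two_mul (t + θ)
    rw [mul_add, sin_add] at h
    have htrig : cos (t + θ) * sin (t + θ) =
        cos (2 * θ) / 2 * sin (2 * t) + sin (2 * θ) / 2 * cos (2 * t) := by linarith
    rw [htrig]
    push_cast
    ring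
  simp_rw [hsplit]
  rw [intervalIntegral.integral_add ((by fun_prop : Continuous _).intervalIntegrable _ _)
      ((by fun_prop : Continuous _).intervalIntegrable _ _),
    intervalIntegral.integral_const_mul, intervalIntegral.integral_const_mul,
    integral_sin_two_mul_mul_cexp_cos, integral_cos_two_mul_mul_cexp_cos]
  push_cast
  ring

theorem circle_integral_cos_sin_exp_general (r : ℝ) (u₁ u₂ : ℝ)
    (hu : u₁ ^ 2 + u₂ ^ 2 = 1) :
    ∫ t in (-Real.pi)..Real.pi,
        ((Real.cos t * Real.sin t : ℝ) : ℂ) *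
          Complex.exp (Complex.I * (r : ℂ) *
            ((u₁ * Real.cos t + u₂ * Real.sin t : ℝ) : ℂ)) =
      ((-(2 * Real.pi) * u₁ * u₂ * besselJ 2 r : ℝ) : ℂ) := by
  obtain ⟨θ, rfl, rfl⟩ := exists_cos_sin_eq_of_sq_add_sq_eq_one hu
  rw [integral_cos_mul_sin_mul_cexp_rotate, integral_cos_add_mul_sin_add_mul_cexp_cos, sin_two_mul]
  congr 1
  ring

/-- For every `r ≥ 0` and every unit vector `(u₁, u₂) ∈ ℝ²`,
`∫_{-π}^{π} cos t · sin t · exp(i r (u₁ cos t + u₂ sin t)) dt = −2π u₁ u₂ J₂(r)`. -/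
theorem circle_integral_cos_sin_exp (r : ℝ) (hr : 0 ≤ r) (u₁ u₂ : ℝ)
    (hu : u₁ ^ 2 + u₂ ^ 2 = 1) :
    ∫ t in (-Real.pi)..Real.pi,
        ((Real.cos t * Real.sin t : ℝ) : ℂ) *
          Complex.exp (Complex.I * (r : ℂ) *
            ((u₁ * Real.cos t + u₂ * Real.sin t : ℝ) : ℂ)) =
      ((-(2 * Real.pi) * u₁ * u₂ * besselJ 2 r : ℝ) : ℂ) :=
  circle_integral_cos_sin_exp_general r u₁ u₂ hu
end

section
/- For every a ∈ {0,1,2} and every b ∈ {1,2,3,4} there exists a constant C = C(a,b) > 0 such that for all R ≥ 1: if b ∈ {1,2,3} then ∫_{{u ∈ ℝ² : ‖u‖ ≤ R}} |J_a(2π‖u‖)|^b du ≤ C · R^{2 − b/2}, while if b = 4 then ∫_{{u ∈ ℝ² : ‖u‖ ≤ R}} |J_a(2π‖u‖)|^4 du ≤ C · (1 + log R). -/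
/-!
Bessel's equation is read off from the power series, on which the Euler operator `t d/dt` acts
termwise: `(t d/dt)² J_n = (n² - t²) J_n`. The Liouville substitution `y = √t J_n` turns it into
`y'' + (1 + (1/4 - n²)/t²) y = 0`, and for such an equation the energy `(y² + y'²) e^{c/t}` is
non-increasing on `[1, ∞)` as soon as `c ≥ |1/4 - n²|`. Hence `|J_n(t)| ≤ D max(t, 1)^{-1/2}`,
so `|J_n(2π‖u‖)|^b ≤ D^b max(‖u‖, 1)^{-b/2}`, and polar coordinates reduce the integral over the
disc to `2π ∫₀^R r max(r, 1)^{-b/2} dr`, which is `O(R^{2-b/2})` for `b ≤ 3` and `O(1 + log R)`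
for `b = 4`.
-/

open Real MeasureTheory

open Metric Set

section EulerSeries

variable {c : ℕ → ℝ} {e : ℕ → ℕ}

/-- `(x d/dx)^k` applied termwise to `∑ c m * x ^ e m`. -/
noncomputable def eulerSeries (c : ℕ → ℝ) (e : ℕ → ℕ) (k : ℕ) (x : ℝ) : ℝ :=
  ∑' m, c m * (e m : ℝ) ^ k * x ^ e m

theorem summable_eulerSeries (hc : ∀ k r, Summable fun m => |c m| * (e m : ℝ) ^ k * r ^ e m)
    (k : ℕ) (x : ℝ) : Summable fun m => c m * (e m : ℝ) ^ k * x ^ e m :=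
  (hc k |x|).of_norm_bounded fun m => by simp

theorem hasDerivAt_eulerSeries (hc : ∀ k r, Summable fun m => |c m| * (e m : ℝ) ^ k * r ^ e m)
    (k : ℕ) (x : ℝ) :
    HasDerivAt (eulerSeries c e k) (∑' m, c m * (e m : ℝ) ^ (k + 1) * x ^ (e m - 1)) x := by
  have hx : x ∈ ball (0 : ℝ) (|x| + 1) := by
    rw [mem_ball_zero_iff, Real.norm_eq_abs]; linarith
  unfold eulerSeries
  refine hasDerivAt_tsum_of_isPreconnected (g := fun m y => c m * (e m : ℝ) ^ k * y ^ e m)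
    (g' := fun m y => c m * (e m : ℝ) ^ (k + 1) * y ^ (e m - 1)) (hc (k + 1) (|x| + 1)) isOpen_ball
    (convex_ball _ _).isPreconnected (fun m y _ => ?_) (fun m y hy => ?_) hx
    (summable_eulerSeries hc k x) hx
  · exact ((hasDerivAt_pow (e m) y).const_mul _).congr_deriv (by ring)
  · rw [mem_ball_zero_iff, Real.norm_eq_abs] at hy
    have hpow : |y| ^ (e m - 1) ≤ (|x| + 1) ^ e m :=
      (pow_le_pow_left₀ (abs_nonneg y) hy.le _).trans
        (pow_le_pow_right₀ (by linarith [abs_nonneg x]) (Nat.sub_le _ _))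
    rw [Real.norm_eq_abs, abs_mul, abs_mul, abs_pow, abs_pow, Nat.abs_cast]
    gcongr

theorem hasDerivAt_eulerSeries_of_ne_zero
    (hc : ∀ k r, Summable fun m => |c m| * (e m : ℝ) ^ k * r ^ e m) (k : ℕ) {x : ℝ} (hx : x ≠ 0) :
    HasDerivAt (eulerSeries c e k) (eulerSeries c e (k + 1) x / x) x := by
  convert hasDerivAt_eulerSeries hc k x using 1
  rw [eulerSeries, ← tsum_div_const]
  congr 1 with m
  rcases Nat.eq_zero_or_pos (e m) with h | h
  · simp [h]
  · rw [← Nat.sub_add_cancel h, pow_succ]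
    field_simp
    push_cast
    ring

end EulerSeries

open Nat in
noncomputable def besselCoeff (n m : ℕ) : ℝ := (-1) ^ m / (m ! * (m + n)!)

theorem abs_besselCoeff_le (n m : ℕ) : |besselCoeff n m| ≤ 1 / m.factorial := by
  have hm : (0 : ℝ) < m.factorial := by positivity
  have hmn : (1 : ℝ) ≤ (m + n).factorial := by exact_mod_cast (m + n).factorial_pos
  rw [besselCoeff, abs_div, abs_pow, abs_neg, abs_one, one_pow, abs_of_pos (by positivity)]
  gcongr
  exact le_mul_of_one_le_right hm.le hmn

theorem summable_besselCoeff (n k : ℕ) (r : ℝ) :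
    Summable fun m => |besselCoeff n m| * ((2 * m + n : ℕ) : ℝ) ^ k * r ^ (2 * m + n) := by
  have hexp (m : ℕ) : ((2 * m + n : ℕ) : ℝ) ≤ (n + 2) * 2 ^ m := by
    have : 2 * m + n ≤ (n + 2) * 2 ^ m := by
      nlinarith [Nat.lt_two_pow_self (n := m), Nat.one_le_two_pow (n := m)]
    exact_mod_cast this
  refine .of_norm_bounded
    ((Real.summable_pow_div_factorial (2 ^ k * r ^ 2)).mul_left ((n + 2) ^ k * |r| ^ n))
    fun m => ?_
  rw [Real.norm_eq_abs, abs_mul, abs_mul, abs_abs, abs_pow, abs_pow, Nat.abs_cast]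
  calc |besselCoeff n m| * ((2 * m + n : ℕ) : ℝ) ^ k * |r| ^ (2 * m + n)
      ≤ 1 / m.factorial * ((n + 2) * 2 ^ m) ^ k * |r| ^ (2 * m + n) := by
        gcongr
        · exact abs_besselCoeff_le n m
        · exact hexp m
    _ = (n + 2) ^ k * |r| ^ n * ((2 ^ k * r ^ 2) ^ m / m.factorial) := by
        rw [pow_add, pow_mul, sq_abs, mul_pow, mul_pow, ← pow_mul, ← pow_mul, ← pow_mul,
          mul_comm k m]
        ring

theorem besselCoeff_succ_mul (n m : ℕ) :
    besselCoeff n (m + 1) * (((2 * (m + 1) + n : ℕ) : ℝ) ^ 2 - (n : ℝ) ^ 2) =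
      -4 * besselCoeff n m := by
  rw [besselCoeff, besselCoeff, show m + 1 + n = m + n + 1 by ring, Nat.factorial_succ,
    Nat.factorial_succ]
  push_cast
  field_simp
  ring

theorem eulerSeries_besselCoeff_two (n : ℕ) (x : ℝ) :
    eulerSeries (besselCoeff n) (fun m => 2 * m + n) 2 x =
      ((n : ℝ) ^ 2 - 4 * x ^ 2) * eulerSeries (besselCoeff n) (fun m => 2 * m + n) 0 x := by
  have hc := summable_besselCoeff n
  set f := fun m => besselCoeff n m * x ^ (2 * m + n)
  set q := fun m => besselCoeff n m * (((2 * m + n : ℕ) : ℝ) ^ 2 - (n : ℝ) ^ 2) * x ^ (2 * m + n)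
  have hf : Summable f := by simpa using summable_eulerSeries hc 0 x
  have hq : Summable q := by
    refine ((summable_eulerSeries hc 2 x).sub (hf.mul_left ((n : ℝ) ^ 2))).congr fun m => ?_
    simp only [f, q]
    ring
  have hq_succ (m : ℕ) : q (m + 1) = -4 * x ^ 2 * f m := by
    simp only [q, f]
    rw [besselCoeff_succ_mul, show 2 * (m + 1) + n = 2 * m + n + 2 by ring, pow_add]
    ring
  calc eulerSeries (besselCoeff n) (fun m => 2 * m + n) 2 x = ∑' m, ((n : ℝ) ^ 2 * f m + q m) := by
        refine tsum_congr fun m => ?_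
        simp only [f, q]
        ring
    _ = (n : ℝ) ^ 2 * ∑' m, f m + ∑' m, -4 * x ^ 2 * f m := by
        rw [(hf.mul_left _).tsum_add hq, tsum_mul_left, hq.tsum_eq_zero_add, tsum_congr hq_succ]
        simp [q]
    _ = ((n : ℝ) ^ 2 - 4 * x ^ 2) * eulerSeries (besselCoeff n) (fun m => 2 * m + n) 0 x := by
        rw [tsum_mul_left, eulerSeries]
        simp only [f, pow_zero, mul_one]
        ring

/-- `(t d/dt)^k J_n (t)`. -/
noncomputable def besselJEuler (n k : ℕ) (t : ℝ) : ℝ :=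
  eulerSeries (besselCoeff n) (fun m => 2 * m + n) k (t / 2)

theorem besselJEuler_zero (n : ℕ) : besselJEuler n 0 = besselJ n := by
  ext t
  simp [besselJEuler, eulerSeries, besselJ, besselCoeff]

theorem besselJEuler_two (n : ℕ) (t : ℝ) :
    besselJEuler n 2 t = ((n : ℝ) ^ 2 - t ^ 2) * besselJ n t := by
  rw [besselJEuler, eulerSeries_besselCoeff_two, ← besselJEuler_zero, besselJEuler]
  ring

theorem hasDerivAt_besselJEuler (n k : ℕ) {t : ℝ} (ht : t ≠ 0) :
    HasDerivAt (besselJEuler n k) (besselJEuler n (k + 1) t / t) t := by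
  have h := (hasDerivAt_eulerSeries_of_ne_zero (summable_besselCoeff n) k
    (div_ne_zero ht two_ne_zero)).comp t ((hasDerivAt_id t).div_const 2)
  exact h.congr_deriv (by simp only [besselJEuler]; field_simp)

theorem continuous_besselJ (n : ℕ) : Continuous (besselJ n) := by
  rw [← besselJEuler_zero]
  refine continuous_iff_continuousAt.2 fun t => ?_
  exact ((hasDerivAt_eulerSeries (summable_besselCoeff n) 0 (t / 2)).continuousAt).comp
    (f := fun t : ℝ => t / 2) (continuous_id.div_const 2).continuousAt

theorem sq_le_of_hasDerivAt_oscillator {y z q : ℝ → ℝ} {c : ℝ}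
    (hy : ∀ t, 1 ≤ t → HasDerivAt y (z t) t)
    (hz : ∀ t, 1 ≤ t → HasDerivAt z (-(1 + q t) * y t) t)
    (hq : ∀ t, 1 ≤ t → |q t| ≤ c / t ^ 2) {t : ℝ} (ht : 1 ≤ t) :
    y t ^ 2 ≤ (y 1 ^ 2 + z 1 ^ 2) * exp c := by
  set G := fun s => (y s ^ 2 + z s ^ 2) * exp (c / s)
  have hG (s : ℝ) (hs : 1 ≤ s) : HasDerivAt G (exp (c / s) *
      (-2 * q s * y s * z s - c / s ^ 2 * (y s ^ 2 + z s ^ 2))) s := by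
    have h := (((hy s hs).pow 2).add ((hz s hs).pow 2)).mul
      (((hasDerivAt_inv (by positivity : s ≠ 0)).const_mul c).exp)
    refine (h.congr_deriv ?_).congr_of_eventuallyEq
      (.of_forall fun s => by simp [G, div_eq_mul_inv])
    simp only [Pi.add_apply, Pi.pow_apply, Nat.cast_ofNat, div_eq_mul_inv]
    ring
  have hG_nonpos (s : ℝ) (hs : 1 ≤ s) :
      -2 * q s * y s * z s - c / s ^ 2 * (y s ^ 2 + z s ^ 2) ≤ 0 := by
    have hyz : -2 * q s * y s * z s ≤ |q s| * (y s ^ 2 + z s ^ 2) := by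
      rcases abs_cases (q s) with ⟨h, -⟩ | ⟨h, -⟩ <;> rw [h] <;>
        nlinarith [sq_nonneg (y s + z s), sq_nonneg (y s - z s), abs_nonneg (q s)]
    nlinarith [mul_le_mul_of_nonneg_right (hq s hs) (by positivity : 0 ≤ y s ^ 2 + z s ^ 2)]
  have hanti : AntitoneOn G (Ici 1) := by
    refine antitoneOn_of_hasDerivWithinAt_nonpos (convex_Ici 1) (f' := fun s => exp (c / s) *
      (-2 * q s * y s * z s - c / s ^ 2 * (y s ^ 2 + z s ^ 2)))
      (fun s hs => (hG s hs).continuousAt.continuousWithinAt) (fun s hs => ?_) (fun s hs => ?_)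
    all_goals rw [interior_Ici] at hs
    · exact (hG s hs.le).hasDerivWithinAt
    · exact mul_nonpos_of_nonneg_of_nonpos (exp_pos _).le (hG_nonpos s hs.le)
  have hc : 0 ≤ c := by simpa using (abs_nonneg _).trans (hq 1 le_rfl)
  calc y t ^ 2 ≤ G t :=
        (le_add_of_nonneg_right (sq_nonneg (z t))).trans
          (le_mul_of_one_le_right (by positivity) (one_le_exp (by positivity)))
    _ ≤ G 1 := hanti self_mem_Ici ht ht
    _ = (y 1 ^ 2 + z 1 ^ 2) * exp c := by simp [G]

theorem exists_mul_besselJ_sq_le (n : ℕ) : ∃ K, ∀ t, 1 ≤ t → t * besselJ n t ^ 2 ≤ K := by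
  set J := besselJ n
  set P := besselJEuler n 1
  have hJ (t : ℝ) (ht : 0 < t) : HasDerivAt J (P t / t) t := by
    simpa [J, besselJEuler_zero] using hasDerivAt_besselJEuler n 0 ht.ne'
  have hP (t : ℝ) (ht : 0 < t) : HasDerivAt P (((n : ℝ) ^ 2 - t ^ 2) * J t / t) t := by
    simpa [P, besselJEuler_two] using hasDerivAt_besselJEuler n 1 ht.ne'
  have hy (t : ℝ) (ht : 1 ≤ t) :
      HasDerivAt (fun t => √t * J t) ((J t + 2 * P t) / (2 * √t)) t := by
    have ht0 : 0 < t := by linarith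
    refine ((hasDerivAt_sqrt ht0.ne').mul (hJ t ht0)).congr_deriv ?_
    obtain ⟨s, hs, rfl⟩ : ∃ s, 0 < s ∧ t = s ^ 2 := ⟨√t, by positivity, (sq_sqrt ht0.le).symm⟩
    rw [sqrt_sq hs.le]
    field_simp
  have hz (t : ℝ) (ht : 1 ≤ t) : HasDerivAt (fun t => (J t + 2 * P t) / (2 * √t))
      (-(1 + (1 / 4 - (n : ℝ) ^ 2) / t ^ 2) * (√t * J t)) t := by
    have ht0 : 0 < t := by linarith
    refine (((hJ t ht0).add ((hP t ht0).const_mul 2)).div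
      ((hasDerivAt_sqrt ht0.ne').const_mul 2) (by positivity)).congr_deriv ?_
    obtain ⟨s, hs, rfl⟩ : ∃ s, 0 < s ∧ t = s ^ 2 := ⟨√t, by positivity, (sq_sqrt ht0.le).symm⟩
    rw [sqrt_sq hs.le, Pi.add_apply]
    field_simp
    ring
  have hq (t : ℝ) (_ : 1 ≤ t) :
      |(1 / 4 - (n : ℝ) ^ 2) / t ^ 2| ≤ ((n : ℝ) ^ 2 + 1 / 4) / t ^ 2 := by
    rw [abs_div, abs_of_pos (by positivity : 0 < t ^ 2)]
    gcongr
    rw [abs_le]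
    constructor <;> nlinarith [sq_nonneg (n : ℝ)]
  exact ⟨_, fun t ht => le_of_eq_of_le (by rw [mul_pow, sq_sqrt (by linarith)])
    (sq_le_of_hasDerivAt_oscillator hy hz hq ht)⟩

theorem exists_abs_besselJ_le (n : ℕ) :
    ∃ D, 0 < D ∧ ∀ t, 0 ≤ t → |besselJ n t| ≤ D * max t 1 ^ (-(1 / 2) : ℝ) := by
  obtain ⟨K, hK⟩ := exists_mul_besselJ_sq_le n
  obtain ⟨M, hM⟩ := (isCompact_Icc (a := (0 : ℝ)) (b := 1)).exists_bound_of_continuousOn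
    (continuous_besselJ n).continuousOn
  refine ⟨max (max M √K) 1, by positivity, fun t ht => ?_⟩
  rcases le_total t 1 with ht1 | ht1
  · rw [max_eq_right ht1, one_rpow, mul_one]
    exact (hM t ⟨ht, ht1⟩).trans ((le_max_left _ _).trans (le_max_left _ _))
  · have ht0 : 0 < t := by linarith
    rw [max_eq_left ht1, rpow_neg ht0.le, ← sqrt_eq_rpow, ← div_eq_mul_inv]
    calc |besselJ n t| ≤ √(K / t) := abs_le_sqrt (by rw [le_div_iff₀ ht0]; linarith [hK t ht1])
      _ = √K / √t := sqrt_div' K ht0.le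
      _ ≤ _ := by gcongr; exact (le_max_right _ _).trans (le_max_left _ _)

theorem integral_closedBall_fin_two_norm (f : ℝ → ℝ) {R : ℝ} (hR : 0 ≤ R) :
    ∫ u in closedBall (0 : EuclideanSpace ℝ (Fin 2)) R, f ‖u‖ = 2 * π * ∫ r in 0..R, r * f r := by
  have hind : (closedBall (0 : EuclideanSpace ℝ (Fin 2)) R).indicator (fun u => f ‖u‖) =
      fun u => (Iic R).indicator f ‖u‖ := by
    ext u
    simp only [indicator, mem_closedBall_zero_iff, mem_Iic]
  have hball : volume.real (ball (0 : EuclideanSpace ℝ (Fin 2)) 1) = π := by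
    simp [Measure.real, pi_pos.le]
  rw [← integral_indicator measurableSet_closedBall, hind, integral_fun_norm_addHaar, hball,
    intervalIntegral.integral_of_le hR]
  have hrad : (fun y : ℝ => y ^ (Module.finrank ℝ (EuclideanSpace ℝ (Fin 2)) - 1) •
      (Iic R).indicator f y) = (Iic R).indicator fun y => y * f y := by
    ext y
    rw [indicator_mul_right]
    simp
  rw [hrad, setIntegral_indicator measurableSet_Iic, Ioi_inter_Iic]
  simp only [finrank_euclideanSpace_fin, smul_eq_mul, nsmul_eq_mul]
  ring

theorem integral_closedBall_le_of_le_norm {g : EuclideanSpace ℝ (Fin 2) → ℝ} {w : ℝ → ℝ}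
    (hw : Continuous w) (hg : ∀ u, 0 ≤ g u) (hgw : ∀ u, g u ≤ w ‖u‖) {R : ℝ} (hR : 0 ≤ R) :
    ∫ u in closedBall (0 : EuclideanSpace ℝ (Fin 2)) R, g u ≤ 2 * π * ∫ r in 0..R, r * w r := by
  rw [← integral_closedBall_fin_two_norm w hR]
  exact integral_mono_of_nonneg (.of_forall hg)
    ((hw.comp continuous_norm).continuousOn.integrableOn_compact (isCompact_closedBall _ _))
    (.of_forall hgw)

theorem continuous_max_one_rpow (β : ℝ) : Continuous fun r : ℝ => max r 1 ^ β :=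
  (continuous_id.max continuous_const).rpow_const fun r => .inl (by positivity)

theorem integral_mul_max_one_rpow_neg (β : ℝ) {R : ℝ} (hR : 1 ≤ R) :
    ∫ r in 0..R, r * max r 1 ^ (-β) = 1 / 2 + ∫ r in 1..R, r ^ (1 - β) := by
  have hcont : Continuous fun r : ℝ => r * max r 1 ^ (-β) :=
    continuous_id.mul (continuous_max_one_rpow _)
  rw [← intervalIntegral.integral_add_adjacent_intervals (hcont.intervalIntegrable 0 1)
    (hcont.intervalIntegrable 1 R)]
  congr 1
  · rw [intervalIntegral.integral_congr (g := fun r => r) fun r hr => ?_, integral_id]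
    · norm_num
    · rw [uIcc_of_le zero_le_one] at hr
      simp [max_eq_right hr.2]
  · refine intervalIntegral.integral_congr fun r hr => ?_
    rw [uIcc_of_le hR] at hr
    have hr0 : 0 < r := by linarith [hr.1]
    simp only [max_eq_left hr.1]
    rw [sub_eq_add_neg, rpow_add hr0, rpow_one]

theorem integral_mul_max_one_rpow_neg_le {β : ℝ} (hβ : β < 2) {R : ℝ} (hR : 1 ≤ R) :
    ∫ r in 0..R, r * max r 1 ^ (-β) ≤ (1 / 2 + 1 / (2 - β)) * R ^ (2 - β) := by
  rw [integral_mul_max_one_rpow_neg β hR, integral_rpow (.inl (by linarith)), one_rpow,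
    show 1 - β + 1 = 2 - β by ring]
  have hRβ : 1 ≤ R ^ (2 - β) := one_le_rpow hR (by linarith)
  have hβ' : 0 < 2 - β := by linarith
  have h : (R ^ (2 - β) - 1) / (2 - β) ≤ 1 / (2 - β) * R ^ (2 - β) := by
    rw [one_div_mul_eq_div]
    gcongr
    linarith
  linarith

theorem integral_mul_max_one_rpow_neg_le_three {β : ℝ} (hβ : β ≤ 3 / 2) {R : ℝ} (hR : 1 ≤ R) :
    ∫ r in 0..R, r * max r 1 ^ (-β) ≤ 3 * R ^ (2 - β) := by
  refine (integral_mul_max_one_rpow_neg_le (by linarith) hR).trans ?_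
  have h : 1 / (2 - β) ≤ 2 := by
    rw [div_le_iff₀ (by linarith)]
    linarith
  gcongr
  linarith

theorem integral_mul_max_one_rpow_neg_two {R : ℝ} (hR : 1 ≤ R) :
    ∫ r in 0..R, r * max r 1 ^ (-2 : ℝ) = 1 / 2 + log R := by
  rw [integral_mul_max_one_rpow_neg 2 hR, show (1 : ℝ) - 2 = -1 by norm_num,
    intervalIntegral.integral_congr (g := fun r => r⁻¹) fun r _ => rpow_neg_one r,
    integral_inv_of_pos one_pos (by linarith), div_one]

theorem abs_pow_le_of_abs_le_max_rpow {f : ℝ → ℝ} {D c : ℝ} (hD : 0 ≤ D) (hc : 1 ≤ c)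
    (hf : ∀ t, 0 ≤ t → |f t| ≤ D * max t 1 ^ (-(1 / 2) : ℝ)) (b : ℕ) {r : ℝ} (hr : 0 ≤ r) :
    |f (c * r)| ^ b ≤ D ^ b * max r 1 ^ (-((b : ℝ) / 2)) := by
  have hmax : max r 1 ≤ max (c * r) 1 := max_le_max (le_mul_of_one_le_left hr hc) le_rfl
  have hfr : |f (c * r)| ≤ D * max r 1 ^ (-(1 / 2) : ℝ) :=
    (hf _ (by positivity)).trans (mul_le_mul_of_nonneg_left
      (rpow_le_rpow_of_nonpos (by positivity) hmax (by norm_num)) hD)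
  calc |f (c * r)| ^ b ≤ (D * max r 1 ^ (-(1 / 2) : ℝ)) ^ b := by gcongr
    _ = D ^ b * max r 1 ^ (-((b : ℝ) / 2)) := by
      rw [mul_pow, ← rpow_natCast (max r 1 ^ _), ← rpow_mul (by positivity)]
      ring_nf

theorem besselJ_power_integral_bound_general (a : ℕ) (b : ℕ) :
    ∃ C : ℝ, 0 < C ∧ ∀ R : ℝ, 1 ≤ R →
      (b ≤ 3 →
        (∫ u in Metric.closedBall (0 : EuclideanSpace ℝ (Fin 2)) R,
            |besselJ a (2 * Real.pi * ‖u‖)| ^ b) ≤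
          C * R ^ ((2 : ℝ) - (b : ℝ) / 2)) ∧
      (b = 4 →
        (∫ u in Metric.closedBall (0 : EuclideanSpace ℝ (Fin 2)) R,
            |besselJ a (2 * Real.pi * ‖u‖)| ^ 4) ≤
          C * (1 + Real.log R)) := by
  obtain ⟨D, hD, hJ⟩ := exists_abs_besselJ_le a
  refine ⟨6 * π * D ^ b, by positivity, fun R hR => ?_⟩
  have hint : ∫ u in closedBall (0 : EuclideanSpace ℝ (Fin 2)) R, |besselJ a (2 * π * ‖u‖)| ^ b ≤
      2 * π * D ^ b * ∫ r in 0..R, r * max r 1 ^ (-((b : ℝ) / 2)) := by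
    calc _ ≤ 2 * π * ∫ r in 0..R, r * (D ^ b * max r 1 ^ (-((b : ℝ) / 2))) :=
          integral_closedBall_le_of_le_norm ((continuous_max_one_rpow _).const_mul _)
            (fun u => by positivity) (fun u => abs_pow_le_of_abs_le_max_rpow hD.le
              (by linarith [pi_gt_three]) hJ b (norm_nonneg u)) (by linarith)
      _ = _ := by simp_rw [mul_left_comm _ (D ^ b), intervalIntegral.integral_const_mul, mul_assoc]
  refine ⟨fun hb => ?_, fun hb => ?_⟩
  · have hβ : (b : ℝ) / 2 ≤ 3 / 2 := by
      rw [div_le_div_iff_of_pos_right two_pos]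
      exact_mod_cast hb
    calc _ ≤ _ := hint
      _ ≤ 2 * π * D ^ b * (3 * R ^ (2 - (b : ℝ) / 2)) := by
          gcongr
          exact integral_mul_max_one_rpow_neg_le_three hβ hR
      _ = 6 * π * D ^ b * R ^ (2 - (b : ℝ) / 2) := by ring
  · subst hb
    calc _ ≤ _ := hint
      _ = 2 * π * D ^ 4 * (1 / 2 + log R) := by
          rw [show ((4 : ℕ) : ℝ) / 2 = 2 by norm_num, integral_mul_max_one_rpow_neg_two hR]
      _ ≤ 6 * π * D ^ 4 * (1 + log R) := by
          have hπD : 0 < π * D ^ 4 := by positivity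
          nlinarith [mul_nonneg hπD.le (log_nonneg hR)]

/-- For every `a ∈ {0,1,2}` and `b ∈ {1,2,3,4}` there is `C > 0` such that for all `R ≥ 1`:
if `b ≤ 3` then `∫_{‖u‖ ≤ R} |J_a(2π‖u‖)|^b du ≤ C R^{2 − b/2}`, while if `b = 4` then
`∫_{‖u‖ ≤ R} |J_a(2π‖u‖)|⁴ du ≤ C (1 + log R)`. -/
theorem besselJ_power_integral_bound (a : ℕ) (ha : a ≤ 2) (b : ℕ) (hb1 : 1 ≤ b) (hb4 : b ≤ 4) :
    ∃ C : ℝ, 0 < C ∧ ∀ R : ℝ, 1 ≤ R →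
      (b ≤ 3 →
        (∫ u in Metric.closedBall (0 : EuclideanSpace ℝ (Fin 2)) R,
            |besselJ a (2 * Real.pi * ‖u‖)| ^ b) ≤
          C * R ^ ((2 : ℝ) - (b : ℝ) / 2)) ∧
      (b = 4 →
        (∫ u in Metric.closedBall (0 : EuclideanSpace ℝ (Fin 2)) R,
            |besselJ a (2 * Real.pi * ‖u‖)| ^ 4) ≤
          C * (1 + Real.log R)) :=
  besselJ_power_integral_bound_general a b
end
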